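/- arXiv:1703.10411 — 2 statements merged into one kernel-verified Lean document; each statement's English description precedes it below -/
import Mathlib

section
/- Let z ∈ ℝ_{>0}, let v = (v_1,…,v_r) ∈ ℝ_{>0}^r, and let s ∈ ℂ with Re(s) > r. Then the series Σ_{m ∈ ℤ_{≥0}^r} (z + m·v)^{−s} defining Barnes' multiple zeta function ζ(s,v,z) converges absolutely. -/
/-!
Put `t = Re s` and `q = t / r > 1`. If `ε > 0` is below `z` and every `v i`, then
`z + m ⬝ v ≥ ε (1 + ∑ mᵢ)`, and `(1 + ∑ mᵢ)^r ≥ ∏ (mᵢ + 1)`, so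
`|(z + m ⬝ v)^{-s}| ≤ ε^{-t} ∏ (mᵢ + 1)^{-q}`.
The right-hand side is a product of `r` copies of a convergent `p`-series.
-/

open Finset

theorem summable_pi_fin_prod_of_nonneg {α : Type*} {f : α → ℝ} (hf₀ : ∀ a, 0 ≤ f a)
    (hf : Summable f) (r : ℕ) : Summable fun m : Fin r → α => ∏ i, f (m i) := by
  induction r with
  | zero => exact .of_finite
  | succ n ih =>
    have hprod : Summable fun p : α × (Fin n → α) => f p.1 * ∏ i, f (p.2 i) :=
      hf.mul_of_nonneg (g := fun m : Fin n → α => ∏ i, f (m i)) ih hf₀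
        fun m => prod_nonneg fun i _ => hf₀ _
    refine (hprod.comp_injective (Fin.consEquiv fun _ => α).symm.injective).congr fun m => ?_
    rw [Fin.prod_univ_succ]
    rfl

theorem mul_one_add_sum_le_add_sum_mul {ι : Type*} (s : Finset ι) {x v : ι → ℝ} {z ε : ℝ}
    (hx : ∀ i ∈ s, 0 ≤ x i) (hεz : ε ≤ z) (hεv : ∀ i ∈ s, ε ≤ v i) :
    ε * (1 + ∑ i ∈ s, x i) ≤ z + ∑ i ∈ s, x i * v i := by
  rw [mul_one_add, mul_sum]
  refine add_le_add hεz (sum_le_sum fun i hi => ?_)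
  rw [mul_comm]
  exact mul_le_mul_of_nonneg_left (hεv i hi) (hx i hi)

theorem prod_add_one_le_one_add_sum_pow {ι : Type*} (s : Finset ι) {x : ι → ℝ}
    (hx : ∀ i ∈ s, 0 ≤ x i) : ∏ i ∈ s, (x i + 1) ≤ (1 + ∑ i ∈ s, x i) ^ #s := by
  rw [← prod_const]
  refine prod_le_prod (fun i hi => by linarith [hx i hi]) fun i hi => ?_
  linarith [single_le_sum hx hi]

theorem one_add_sum_rpow_neg_mul_le_prod {r : ℕ} {x : Fin r → ℝ} (hx : ∀ i, 0 ≤ x i)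
    {q : ℝ} (hq : 0 ≤ q) :
    (1 + ∑ i, x i) ^ (-(r * q)) ≤ ∏ i, (x i + 1) ^ (-q) := by
  have hS : 0 ≤ ∑ i, x i := sum_nonneg fun i _ => hx i
  have hprod : 0 < ∏ i, (x i + 1) := prod_pos fun i _ => by linarith [hx i]
  calc (1 + ∑ i, x i) ^ (-(r * q)) = ((1 + ∑ i, x i) ^ r) ^ (-q) := by
        rw [← Real.rpow_natCast, ← Real.rpow_mul (by linarith), mul_neg]
    _ ≤ (∏ i, (x i + 1)) ^ (-q) := by
        refine Real.rpow_le_rpow_of_nonpos hprod ?_ (by linarith)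
        simpa using prod_add_one_le_one_add_sum_pow univ fun i _ => hx i
    _ = ∏ i, (x i + 1) ^ (-q) :=
        (Real.finsetProd_rpow _ _ (fun i _ => by linarith [hx i]) _).symm

theorem add_sum_mul_rpow_neg_mul_le {r : ℕ} {x v : Fin r → ℝ} {z ε q : ℝ}
    (hx : ∀ i, 0 ≤ x i) (hε : 0 < ε) (hεz : ε ≤ z) (hεv : ∀ i, ε ≤ v i) (hq : 0 ≤ q) :
    (z + ∑ i, x i * v i) ^ (-(r * q)) ≤ ε ^ (-(r * q)) * ∏ i, (x i + 1) ^ (-q) := by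
  have hS : 0 ≤ ∑ i, x i := sum_nonneg fun i _ => hx i
  have hrq : 0 ≤ (r : ℝ) * q := by positivity
  calc (z + ∑ i, x i * v i) ^ (-(r * q)) ≤ (ε * (1 + ∑ i, x i)) ^ (-(r * q)) :=
        Real.rpow_le_rpow_of_nonpos (by positivity)
          (mul_one_add_sum_le_add_sum_mul univ (fun i _ => hx i) hεz fun i _ => hεv i)
          (by linarith)
    _ = ε ^ (-(r * q)) * (1 + ∑ i, x i) ^ (-(r * q)) := Real.mul_rpow hε.le (by linarith)
    _ ≤ ε ^ (-(r * q)) * ∏ i, (x i + 1) ^ (-q) := by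
        gcongr
        exact one_add_sum_rpow_neg_mul_le_prod hx hq

theorem summable_nat_add_one_rpow_neg {q : ℝ} (hq : 1 < q) :
    Summable fun n : ℕ => ((n : ℝ) + 1) ^ (-q) := by
  simpa using (summable_nat_add_iff 1).mpr (Real.summable_nat_rpow.mpr (by linarith))

/-- Let `z ∈ ℝ_{>0}`, `v = (v_1, …, v_r) ∈ ℝ_{>0}^r` and `s ∈ ℂ` with
`Re(s) > r`.  Then the series `∑_{m ∈ ℤ_{≥0}^r} (z + m ⬝ v)^{-s}` defining Barnes'
multiple zeta function converges absolutely. -/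
theorem barnes_multiple_zeta_summable (r : ℕ) (z : ℝ) (v : Fin r → ℝ)
    (hz : 0 < z) (hv : ∀ i, 0 < v i) (s : ℂ) (hs : (r : ℝ) < s.re) :
    Summable fun m : Fin r → ℕ =>
      ‖((z + ∑ i, (m i : ℝ) * v i : ℝ) : ℂ) ^ (-s)‖ := by
  rcases Nat.eq_zero_or_pos r with rfl | hr
  · exact .of_finite
  have : Nonempty (Fin r) := Fin.pos_iff_nonempty.mp hr
  obtain ⟨i₀, hi₀⟩ := Finite.exists_min v
  set ε := min z (v i₀)
  set q := s.re / r
  have hr' : (0 : ℝ) < r := by exact_mod_cast hr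
  have hq : 1 < q := (one_lt_div hr').mpr hs
  have hrq : r * q = s.re := mul_div_cancel₀ _ hr'.ne'
  have hdom := (summable_pi_fin_prod_of_nonneg (fun n => by positivity)
    (summable_nat_add_one_rpow_neg hq) r).mul_left (ε ^ (-s.re))
  refine hdom.of_nonneg_of_le (fun m => norm_nonneg _) fun m => ?_
  have hpos : 0 < z + ∑ i, (m i : ℝ) * v i :=
    add_pos_of_pos_of_nonneg hz (sum_nonneg fun i _ => by have := hv i; positivity)
  rw [Complex.norm_cpow_eq_rpow_re_of_pos hpos, Complex.neg_re, ← hrq]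
  exact add_sum_mul_rpow_neg_mul_le (fun i => Nat.cast_nonneg _) (lt_min hz (hv i₀))
    (min_le_left _ _) (fun i => (min_le_right _ _).trans (hi₀ i)) (by linarith)
end

section
/- Let exp_p : ℂ_p → ℂ_p^× be any group homomorphism from the additive group to the multiplicative group which coincides with the power series Σ_{n≥0} z^n/n! on some neighborhood of 0. Then for every z ∈ ℂ_p^× there exists N ∈ ℕ such that (exp_p(log_p z))^{p^N} = ⟨z⟩^{p^N}. In particular, if ord_p(z) = 0, then exp_p(log_p z)/z is a root of unity. -/
open scoped Classical
open Filter

noncomputable section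

namespace Stmt

variable (p : ℕ) [Fact p.Prime] (Cp : Type*) [NormedField Cp]

/-- The basic data attached to `ℂ_p`: the canonical embedding of `ℤ_p`, a compatible system
`p^r` of rational powers of `p`, and the homomorphisms `ord_p`, `θ_p`. -/
structure CpData where
  ψ : ℤ_[p] →+* Cp
  hψ : ∀ x : ℤ_[p], ‖ψ x‖ = ‖x‖
  Ppow : ℚ → Cpˣ
  Ppow_add : ∀ r s : ℚ, Ppow (r + s) = Ppow r * Ppow s
  Ppow_one : (Ppow 1 : Cp) = (p : Cp)
  ord : Cp → ℚ
  θ : Cp → Cp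
  ord_mul : ∀ z w : Cp, z ≠ 0 → w ≠ 0 → ord (z * w) = ord z + ord w
  θ_mul : ∀ z w : Cp, z ≠ 0 → w ≠ 0 → θ (z * w) = θ z * θ w
  θ_root : ∀ z : Cp, z ≠ 0 → ∃ n : ℕ, 0 < n ∧ ¬ p ∣ n ∧ θ z ^ n = 1
  angle_lt : ∀ z : Cp, z ≠ 0 → ‖((Ppow (ord z) : Cp))⁻¹ * (θ z)⁻¹ * z - 1‖ < 1

variable {p Cp}

/-- `⟨z⟩ = p^{-ord_p z} θ_p(z)^{-1} z`. -/
def CpData.angle (E : CpData p Cp) (z : Cp) : Cp :=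
  ((E.Ppow (E.ord z) : Cp))⁻¹ * (E.θ z)⁻¹ * z

/-- The binomial coefficient `binom(t, k)` in `Cp`. -/
def CpData.binom (E : CpData p Cp) (t : Cp) (k : ℕ) : Cp :=
  (∏ i ∈ Finset.range k, (t - (i : Cp))) / (k.factorial : Cp)

/-- `u^t` for `u ∈ 1 + M`, by the binomial series. -/
def CpData.onePow (E : CpData p Cp) (u : Cp) (t : Cp) : Cp :=
  ∑' k : ℕ, E.binom t k * (u - 1) ^ k

/-- The Iwasawa `p`-adic logarithm. -/
def CpData.logp (E : CpData p Cp) (z : Cp) : Cp :=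
  ∑' k : ℕ, (-1 : Cp) ^ k * (E.angle z - 1) ^ (k + 1) / ((k : Cp) + 1)

/-- The finite average `p^{-(l_1+⋯+l_r)} ∑_{n_i < p^{l_i}} g(n)`. -/
def CpData.avg (E : CpData p Cp) {r : ℕ} (g : (Fin r → ℤ_[p]) → Cp) (l : Fin r → ℕ) : Cp :=
  ((p : Cp) ^ (∑ i, l i))⁻¹ *
    ∑ n ∈ Fintype.piFinset (fun i => Finset.range (p ^ (l i))),
      g (fun i => ((n i : ℕ) : ℤ_[p]))

/-- `IterLim r S a` : the iterated limit `lim_{l_1 → ∞} ⋯ lim_{l_r → ∞} S (l_1, …, l_r)`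
exists and equals `a` (innermost limit taken first). -/
def IterLim : (r : ℕ) → ((Fin r → ℕ) → Cp) → Cp → Prop
  | 0, S, a => S (fun i => i.elim0) = a
  | r + 1, S, a => ∃ g : ℕ → Cp, (∀ l0 : ℕ, IterLim r (fun l => S (Fin.cons l0 l)) (g l0)) ∧
      Tendsto g atTop (nhds a)

/-- `I(f)` : the value of the iterated limit of the averages (or `0` if it does not exist). -/
def CpData.Ival (E : CpData p Cp) {r : ℕ} (g : (Fin r → ℤ_[p]) → Cp) : Cp :=
  if h : ∃ a : Cp, IterLim r (E.avg g) a then h.choose else 0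

/-- The function `f_{z, v, s}`. -/
def CpData.fzvs (E : CpData p Cp) {r : ℕ} (v : Fin r → Cp) (z : Cp) (s : ℤ_[p])
    (x : Fin r → ℤ_[p]) : Cp :=
  ((z + ∑ i, E.ψ (x i) * v i) ^ r / ∏ i, v i) *
    E.onePow (E.angle (z + ∑ i, E.ψ (x i) * v i)) (-(E.ψ s))

/-- The `p`-adic multiple zeta function `ζ_p(s, v, z)`. -/
def CpData.zetaP (E : CpData p Cp) {r : ℕ} (s : ℤ_[p]) (v : Fin r → Cp) (z : Cp) : Cp :=
  ((-1 : Cp) ^ r * E.Ival (E.fzvs v z s)) / ∏ k ∈ Finset.Icc 1 r, ((k : Cp) - E.ψ s)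

/-- The `p`-adic log multiple gamma function `LΓ_p(z, v)`, the derivative at `s = 0` of
`ζ_p(s, v, z)`, i.e. the linear coefficient of its power series expansion at `0`. -/
def CpData.LGammaP (E : CpData p Cp) {r : ℕ} (v : Fin r → Cp) (z : Cp) : Cp :=
  if h : ∃ a : ℕ → Cp, ∃ ρ : ℝ, 0 < ρ ∧ ∀ s : ℤ_[p], ‖s‖ < ρ →
      HasSum (fun k : ℕ => a k * (E.ψ s) ^ k) (E.zetaP s v z)
    then h.choose 1 else 0
/-!
For `‖w - 1‖ < 1` the logarithm series `log w` is the limit of `(w ^ p ^ n - 1) / p ^ n`. This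
gives `log (w ^ p ^ N) = p ^ N log w` and, since `exp_p (p ^ n t) = exp_p t ^ p ^ n` and
`exp_p s = 1 + s + O(s ^ 2)`, also `log (exp_p t) = t` whenever `exp_p t` is close to `1`.
The series `log` is injective on the ball `‖w - 1‖ ≤ p⁻²`, and for `N` large both
`exp_p (p ^ N log ⟨z⟩) = exp_p (log_p z) ^ p ^ N` and `⟨z⟩ ^ p ^ N` lie in that ball and have
the same logarithm `p ^ N log ⟨z⟩`, so they are equal. If `ord_p z = 0`, then `⟨z⟩ = θ_p(z)⁻¹ z`
with `θ_p(z)` a root of unity.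
-/

open Topology

theorem norm_natCast_prime_lt_one (hp : ‖(p : Cp)‖ = (p : ℝ)⁻¹) : ‖(p : Cp)‖ < 1 :=
  hp ▸ inv_lt_one_of_one_lt₀ (Nat.one_lt_cast.2 (Fact.out : p.Prime).one_lt)

def logTerm (x : Cp) (k : ℕ) : Cp := (-1) ^ k * x ^ (k + 1) / ((k : Cp) + 1)

def logSeries (w : Cp) : Cp := ∑' k, logTerm (w - 1) k

theorem exists_sq_mul_pow_le {r : ℝ} (hr₀ : 0 ≤ r) (hr₁ : r < 1) :
    ∃ K, ∀ k : ℕ, ((k : ℝ) + 1) ^ 2 * r ^ (k + 1) ≤ K := by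
  obtain ⟨K, hK⟩ := (tendsto_pow_const_mul_const_pow_of_abs_lt_one 2
    (abs_lt.2 ⟨by linarith, hr₁⟩)).bddAbove_range
  exact ⟨K, fun k => by simpa using hK ⟨k + 1, rfl⟩⟩

theorem pow_sub_one_div_eq_sum [CharZero Cp] (w : Cp) (N : ℕ) :
    (w ^ (N + 1) - 1) / ((N + 1 : ℕ) : Cp) =
      ∑ k ∈ Finset.range (N + 1), (N.choose k : Cp) * (w - 1) ^ (k + 1) / ((k : Cp) + 1) := by
  have hN : ((N + 1 : ℕ) : Cp) ≠ 0 := Nat.cast_ne_zero.2 N.succ_ne_zero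
  rw [div_eq_iff hN, Finset.sum_mul]
  conv_lhs => rw [show w = (w - 1) + 1 by ring, add_pow, Finset.sum_range_succ']
  simp only [one_pow, mul_one, pow_zero, Nat.choose_zero_right, Nat.cast_one,
    add_sub_cancel_right]
  refine Finset.sum_congr rfl fun k _ => ?_
  have h := congrArg (Nat.cast (R := Cp)) (Nat.add_one_mul_choose_eq N k)
  have hk : (k : Cp) + 1 ≠ 0 := by exact_mod_cast k.succ_ne_zero
  rw [div_mul_eq_mul_div, eq_div_iff hk]
  push_cast at h ⊢
  linear_combination -(w - 1) ^ (k + 1) * h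

def HasExpSeriesNearZero (f : Cp → Cp) : Prop :=
  ∃ ε : ℝ, 0 < ε ∧ ∀ z : Cp, ‖z‖ < ε → HasSum (fun n : ℕ => z ^ n / (n.factorial : Cp)) (f z)

theorem HasExpSeriesNearZero.map_zero {f : Cp → Cp} (h : HasExpSeriesNearZero f) : f 0 = 1 := by
  obtain ⟨ε, hε, hs⟩ := h
  refine (hs 0 (by simpa using hε)).unique ?_
  convert hasSum_ite_eq 0 (1 : Cp) using 2 with n
  cases n <;> simp

theorem map_natCast_mul_eq_pow {f : Cp → Cp} (h₀ : f 0 = 1)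
    (hhom : ∀ x y : Cp, f (x + y) = f x * f y) (n : ℕ) (t : Cp) : f (n * t) = f t ^ n := by
  induction n with
  | zero => simp [h₀]
  | succ n ih => rw [Nat.cast_succ, add_one_mul, hhom, ih, pow_succ]

section Ultrametric

variable [IsUltrametricDist Cp]

theorem norm_natCast_eq_one_of_not_dvd (hp : ‖(p : Cp)‖ = (p : ℝ)⁻¹) {m : ℕ} (hm : ¬ p ∣ m) :
    ‖(m : Cp)‖ = 1 := by
  have hprime : p.Prime := Fact.out
  refine le_antisymm (IsUltrametricDist.norm_natCast_le_one Cp m) (not_lt.1 fun hlt => ?_)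
  obtain ⟨a, b, hab⟩ : IsCoprime (m : ℤ) p :=
    Nat.isCoprime_iff_coprime.2 ((hprime.coprime_iff_not_dvd.2 hm).symm)
  have key : ‖((a * m + b * p : ℤ) : Cp)‖ < 1 := by
    push_cast
    refine (IsUltrametricDist.norm_add_le_max _ _).trans_lt (max_lt ?_ ?_) <;> rw [norm_mul]
    · exact mul_lt_one_of_nonneg_of_lt_one_right (IsUltrametricDist.norm_intCast_le_one Cp a)
        (norm_nonneg _) hlt
    · exact mul_lt_one_of_nonneg_of_lt_one_right (IsUltrametricDist.norm_intCast_le_one Cp b)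
        (norm_nonneg _) (norm_natCast_prime_lt_one hp)
  simp [hab] at key

theorem inv_le_norm_natCast (hp : ‖(p : Cp)‖ = (p : ℝ)⁻¹) {n : ℕ} (hn : n ≠ 0) :
    (n : ℝ)⁻¹ ≤ ‖(n : Cp)‖ := by
  have hprime : p.Prime := Fact.out
  obtain ⟨e, m, hm, rfl⟩ := Nat.exists_eq_pow_mul_and_not_dvd hn p hprime.ne_one
  have hm0 : 1 ≤ (m : ℝ) := by exact_mod_cast Nat.pos_of_ne_zero (right_ne_zero_of_mul hn)
  push_cast
  rw [norm_mul, norm_natCast_eq_one_of_not_dvd hp hm, mul_one, norm_pow, hp, mul_inv, inv_pow]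
  exact mul_le_of_le_one_right (by positivity) (inv_le_one_of_one_le₀ hm0)

theorem norm_div_natCast_le (hp : ‖(p : Cp)‖ = (p : ℝ)⁻¹) (a : Cp) {n : ℕ} (hn : n ≠ 0) :
    ‖a / n‖ ≤ ‖a‖ * n := by
  have hn' : (0 : ℝ) < n := by exact_mod_cast Nat.pos_of_ne_zero hn
  rw [norm_div, div_le_iff₀ ((inv_pos.2 hn').trans_le (inv_le_norm_natCast hp hn))]
  calc ‖a‖ = ‖a‖ * n * (n : ℝ)⁻¹ := by field_simp
    _ ≤ ‖a‖ * n * ‖(n : Cp)‖ := by gcongr; exact inv_le_norm_natCast hp hn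

theorem norm_pow_sub_pow_le {x y : Cp} {r : ℝ} (hx : ‖x‖ ≤ r) (hy : ‖y‖ ≤ r) (n : ℕ) :
    ‖x ^ (n + 1) - y ^ (n + 1)‖ ≤ r ^ n * ‖x - y‖ := by
  rw [← geom_sum₂_mul, norm_mul]
  refine mul_le_mul_of_nonneg_right (IsUltrametricDist.norm_sum_le_of_forall_le_of_nonneg
    (pow_nonneg ((norm_nonneg x).trans hx) n) fun i hi => ?_) (norm_nonneg _)
  have hi : i ≤ n := Nat.lt_succ_iff.1 (Finset.mem_range.1 hi)
  have hr : 0 ≤ r := (norm_nonneg x).trans hx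
  rw [norm_mul, norm_pow, norm_pow]
  calc ‖x‖ ^ i * ‖y‖ ^ (n + 1 - 1 - i) ≤ r ^ i * r ^ (n + 1 - 1 - i) :=
        mul_le_mul (pow_le_pow_left₀ (norm_nonneg x) hx i)
          (pow_le_pow_left₀ (norm_nonneg y) hy _) (by positivity) (by positivity)
    _ = r ^ n := by rw [← pow_add]; congr 1; omega

theorem norm_le_one_of_norm_sub_one_le_one {w : Cp} (hw : ‖w - 1‖ ≤ 1) : ‖w‖ ≤ 1 := by
  simpa using (IsUltrametricDist.norm_add_le_max (w - 1) 1).trans (max_le hw norm_one.le)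

theorem norm_pow_sub_one_le {w : Cp} (hw : ‖w‖ ≤ 1) (n : ℕ) : ‖w ^ n - 1‖ ≤ ‖w - 1‖ := by
  cases n with
  | zero => simp
  | succ n => simpa [one_pow] using norm_pow_sub_pow_le hw norm_one.le n

theorem norm_logTerm_le (hp : ‖(p : Cp)‖ = (p : ℝ)⁻¹) (x : Cp) (k : ℕ) :
    ‖logTerm x k‖ ≤ (k + 1) * ‖x‖ ^ (k + 1) := by
  have h := norm_div_natCast_le hp ((-1) ^ k * x ^ (k + 1)) k.succ_ne_zero
  push_cast at h
  simpa [logTerm, mul_comm] using h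

theorem norm_logTerm_succ_sub_logTerm_succ_le (hp : ‖(p : Cp)‖ = (p : ℝ)⁻¹) {x y : Cp}
    (hx : ‖x‖ ≤ (p : ℝ)⁻¹ ^ 2) (hy : ‖y‖ ≤ (p : ℝ)⁻¹ ^ 2) (k : ℕ) :
    ‖logTerm x (k + 1) - logTerm y (k + 1)‖ ≤ (p : ℝ)⁻¹ * ‖x - y‖ := by
  have hprime : p.Prime := Fact.out
  have hp0 : (0 : ℝ) < p := Nat.cast_pos.2 hprime.pos
  have hk : k + 2 ≤ p ^ (k + 1) :=
    (Nat.lt_two_pow_self (n := k + 1)).trans_le (Nat.pow_le_pow_left hprime.two_le _)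
  have h : logTerm x (k + 1) - logTerm y (k + 1) =
      (-1) ^ (k + 1) * (x ^ (k + 1 + 1) - y ^ (k + 1 + 1)) / ((k + 2 : ℕ) : Cp) := by
    simp only [logTerm]; push_cast; ring
  rw [h]
  calc _ ≤ ‖(-1) ^ (k + 1) * (x ^ (k + 1 + 1) - y ^ (k + 1 + 1))‖ * (k + 2 : ℕ) :=
        norm_div_natCast_le hp _ (by omega)
    _ ≤ (((p : ℝ)⁻¹ ^ 2) ^ (k + 1) * ‖x - y‖) * (p : ℝ) ^ (k + 1) := by
        rw [norm_mul, norm_pow, norm_neg, norm_one, one_pow, one_mul]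
        gcongr
        · exact norm_pow_sub_pow_le hx hy _
        · exact_mod_cast hk
    _ = (p : ℝ)⁻¹ ^ (k + 1) * ‖x - y‖ * ((p : ℝ)⁻¹ * p) ^ (k + 1) := by ring
    _ = (p : ℝ)⁻¹ ^ (k + 1) * ‖x - y‖ := by rw [inv_mul_cancel₀ hp0.ne', one_pow, mul_one]
    _ ≤ (p : ℝ)⁻¹ * ‖x - y‖ := by
        gcongr
        exact pow_le_of_le_one (by positivity)
          (inv_le_one_of_one_le₀ (Nat.one_le_cast.2 hprime.one_le)) k.succ_ne_zero

theorem norm_choose_sub_neg_one_pow_le [CharZero Cp] (hp : ‖(p : Cp)‖ = (p : ℝ)⁻¹) (N k : ℕ) :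
    ‖(N.choose k : Cp) - (-1) ^ k‖ ≤ k * ‖((N + 1 : ℕ) : Cp)‖ := by
  induction k with
  | zero => simp
  | succ k ih =>
    have hk : ((k + 1 : ℕ) : Cp) ≠ 0 := Nat.cast_ne_zero.2 k.succ_ne_zero
    have hrec : (N.choose (k + 1) : Cp) =
        (N.choose k : Cp) * ((N + 1 : ℕ) : Cp) / ((k + 1 : ℕ) : Cp) - N.choose k := by
      have h := congrArg (Nat.cast (R := Cp)) (Nat.add_one_mul_choose_eq N k)
      rw [Nat.choose_succ_succ'] at h
      rw [eq_sub_iff_add_eq, eq_div_iff hk]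
      push_cast at h ⊢
      linear_combination -h
    have hstep : ‖(N.choose k : Cp) * ((N + 1 : ℕ) : Cp) / ((k + 1 : ℕ) : Cp)‖ ≤
        (k + 1 : ℕ) * ‖((N + 1 : ℕ) : Cp)‖ := by
      calc _ ≤ ‖(N.choose k : Cp) * ((N + 1 : ℕ) : Cp)‖ * (k + 1 : ℕ) :=
            norm_div_natCast_le hp _ k.succ_ne_zero
        _ ≤ ‖((N + 1 : ℕ) : Cp)‖ * (k + 1 : ℕ) := by
            rw [norm_mul]
            gcongr
            exact mul_le_of_le_one_left (norm_nonneg _)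
              (IsUltrametricDist.norm_natCast_le_one Cp _)
        _ = (k + 1 : ℕ) * ‖((N + 1 : ℕ) : Cp)‖ := mul_comm _ _
    rw [hrec, show ∀ a b : Cp, a - b - (-1) ^ (k + 1) = a + -(b - (-1) ^ k) by intros; ring]
    refine (IsUltrametricDist.norm_add_le_max _ _).trans (max_le ?_ ?_)
    · exact hstep
    · rw [norm_neg]
      exact ih.trans (by gcongr; exact_mod_cast k.le_succ)

theorem norm_choose_mul_div_sub_logTerm_le [CharZero Cp] (hp : ‖(p : Cp)‖ = (p : ℝ)⁻¹) (x : Cp)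
    (N k : ℕ) : ‖(N.choose k : Cp) * x ^ (k + 1) / ((k : Cp) + 1) - logTerm x k‖ ≤
      (k + 1) ^ 2 * ‖x‖ ^ (k + 1) * ‖((N + 1 : ℕ) : Cp)‖ := by
  have h := norm_div_natCast_le hp (((N.choose k : Cp) - (-1) ^ k) * x ^ (k + 1))
    k.succ_ne_zero
  rw [norm_mul, norm_pow] at h
  push_cast at h
  calc _ ≤ ‖(N.choose k : Cp) - (-1) ^ k‖ * ‖x‖ ^ (k + 1) * (k + 1) := by
        rw [logTerm, ← sub_div, ← sub_mul]; exact h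
    _ ≤ (k * ‖((N + 1 : ℕ) : Cp)‖) * ‖x‖ ^ (k + 1) * (k + 1) := by
        gcongr; exact norm_choose_sub_neg_one_pow_le hp N k
    _ = (k * (k + 1) * ‖x‖ ^ (k + 1)) * ‖((N + 1 : ℕ) : Cp)‖ := by ring
    _ ≤ (k + 1) ^ 2 * ‖x‖ ^ (k + 1) * ‖((N + 1 : ℕ) : Cp)‖ := by gcongr; nlinarith

theorem summable_logTerm [CompleteSpace Cp] (hp : ‖(p : Cp)‖ = (p : ℝ)⁻¹) {x : Cp}
    (hx : ‖x‖ < 1) : Summable (logTerm x) := by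
  refine NonarchimedeanAddGroup.summable_of_tendsto_cofinite_zero ?_
  rw [Nat.cofinite_eq_atTop, tendsto_zero_iff_norm_tendsto_zero]
  refine squeeze_zero (fun _ => norm_nonneg _) (norm_logTerm_le hp x) ?_
  exact ((tendsto_self_mul_const_pow_of_lt_one (norm_nonneg x) hx).comp
    (tendsto_add_atTop_nat 1)).congr fun k => by simp

theorem exists_norm_pow_sub_one_div_sub_logSeries_le [CompleteSpace Cp] [CharZero Cp]
    (hp : ‖(p : Cp)‖ = (p : ℝ)⁻¹) {w : Cp} (hw : ‖w - 1‖ < 1) : ∃ K, ∀ m : ℕ, m ≠ 0 →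
      ‖(w ^ m - 1) / (m : Cp) - logSeries w‖ ≤ K * max ‖(m : Cp)‖ (m : ℝ)⁻¹ := by
  set x := w - 1
  obtain ⟨K, hK⟩ := exists_sq_mul_pow_le (norm_nonneg x) hw
  refine ⟨K, fun m hm => ?_⟩
  obtain ⟨N, rfl⟩ := Nat.exists_eq_add_one_of_ne_zero hm
  set ε := max ‖((N + 1 : ℕ) : Cp)‖ ((N + 1 : ℕ) : ℝ)⁻¹
  have hK₀ : 0 ≤ K := (by positivity : (0 : ℝ) ≤ ((0 : ℕ) + 1) ^ 2 * ‖x‖ ^ (0 + 1)).trans (hK 0)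
  have head : ∀ k ∈ Finset.range (N + 1),
      ‖(N.choose k : Cp) * x ^ (k + 1) / ((k : Cp) + 1) - logTerm x k‖ ≤ K * ε := fun k _ =>
    (norm_choose_mul_div_sub_logTerm_le hp x N k).trans
      (mul_le_mul (hK k) (le_max_left _ _) (norm_nonneg _) hK₀)
  have tail : ∀ k, ‖logTerm x (k + (N + 1))‖ ≤ K * ε := by
    intro k
    have hN : (0 : ℝ) < (N + 1 : ℕ) := by positivity
    have hj : ((N + 1 : ℕ) : ℝ) ≤ (k + (N + 1) : ℕ) + 1 := by push_cast; linarith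
    calc _ ≤ ((k + (N + 1) : ℕ) + 1) * ‖x‖ ^ (k + (N + 1) + 1) := norm_logTerm_le hp x _
      _ ≤ ((k + (N + 1) : ℕ) + 1) * ‖x‖ ^ (k + (N + 1) + 1) *
            ((((k + (N + 1) : ℕ) : ℝ) + 1) * ((N + 1 : ℕ) : ℝ)⁻¹) :=
          le_mul_of_one_le_right (by positivity) (by rwa [← div_eq_mul_inv, one_le_div hN])
      _ = (((k + (N + 1) : ℕ) + 1) ^ 2 * ‖x‖ ^ (k + (N + 1) + 1)) * ((N + 1 : ℕ) : ℝ)⁻¹ := by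
          ring
      _ ≤ K * ε := by gcongr; exacts [hK _, le_max_right _ _]
  rw [pow_sub_one_div_eq_sum, logSeries, ← (summable_logTerm hp hw).sum_add_tsum_nat_add (N + 1),
    sub_add_eq_sub_sub, ← Finset.sum_sub_distrib, sub_eq_add_neg]
  refine (IsUltrametricDist.norm_add_le_max _ _).trans (max_le ?_ ?_)
  · exact IsUltrametricDist.norm_sum_le_of_forall_le_of_nonneg (by positivity) head
  · rw [norm_neg]
    exact IsUltrametricDist.norm_tsum_le_of_forall_le_of_nonneg (by positivity) tail

theorem tendsto_pow_prime_pow_sub_one_div [CompleteSpace Cp] [CharZero Cp]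
    (hp : ‖(p : Cp)‖ = (p : ℝ)⁻¹) {w : Cp} (hw : ‖w - 1‖ < 1) :
    Tendsto (fun n : ℕ => (w ^ p ^ n - 1) / (p : Cp) ^ n) atTop (𝓝 (logSeries w)) := by
  have hprime : p.Prime := Fact.out
  obtain ⟨K, hK⟩ := exists_norm_pow_sub_one_div_sub_logSeries_le hp hw
  rw [tendsto_iff_norm_sub_tendsto_zero]
  refine squeeze_zero (fun _ => norm_nonneg _) (fun n => ?_)
    (by simpa using (tendsto_pow_atTop_nhds_zero_of_lt_one (by positivity)
      (hp ▸ norm_natCast_prime_lt_one hp)).const_mul K)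
  have h := hK (p ^ n) (pow_ne_zero n hprime.ne_zero)
  push_cast at h
  rw [norm_pow, hp, ← inv_pow, max_self] at h
  simpa only [inv_pow] using h

theorem logSeries_pow_prime_pow [CompleteSpace Cp] [CharZero Cp]
    (hp : ‖(p : Cp)‖ = (p : ℝ)⁻¹) {w : Cp} (hw : ‖w - 1‖ < 1) (N : ℕ) :
    logSeries (w ^ p ^ N) = (p : Cp) ^ N * logSeries w := by
  have hp0 : (p : Cp) ≠ 0 := Nat.cast_ne_zero.2 (Fact.out : p.Prime).ne_zero
  have hw' : ‖w ^ p ^ N - 1‖ < 1 :=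
    (norm_pow_sub_one_le (norm_le_one_of_norm_sub_one_le_one hw.le) _).trans_lt hw
  refine tendsto_nhds_unique (tendsto_pow_prime_pow_sub_one_div hp hw') ?_
  refine (((tendsto_pow_prime_pow_sub_one_div hp hw).comp (tendsto_add_atTop_nat N)).const_mul
    ((p : Cp) ^ N)).congr fun n => ?_
  rw [Function.comp_apply, ← pow_mul, ← pow_add, add_comm, pow_add (p : Cp)]
  field_simp

theorem tendsto_pow_prime_pow_nhds_one [CompleteSpace Cp] [CharZero Cp]
    (hp : ‖(p : Cp)‖ = (p : ℝ)⁻¹) {w : Cp} (hw : ‖w - 1‖ < 1) :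
    Tendsto (fun n : ℕ => w ^ p ^ n) atTop (𝓝 1) := by
  have hp0 : (p : Cp) ≠ 0 := Nat.cast_ne_zero.2 (Fact.out : p.Prime).ne_zero
  have h := (tendsto_pow_atTop_nhds_zero_of_norm_lt_one (norm_natCast_prime_lt_one hp)).mul
    (tendsto_pow_prime_pow_sub_one_div hp hw)
  rw [← tendsto_sub_nhds_zero_iff]
  simpa [mul_div_cancel₀ _ (pow_ne_zero _ hp0)] using h

theorem logSeries_injOn [CompleteSpace Cp] (hp : ‖(p : Cp)‖ = (p : ℝ)⁻¹) :
    Set.InjOn logSeries (Metric.closedBall (1 : Cp) ((p : ℝ)⁻¹ ^ 2)) := by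
  have hp1 : (p : ℝ)⁻¹ < 1 := hp ▸ norm_natCast_prime_lt_one hp
  intro w hw w' hw' h
  rw [Metric.mem_closedBall, dist_eq_norm] at hw hw'
  have hρ : (p : ℝ)⁻¹ ^ 2 < 1 := pow_lt_one₀ (by positivity) hp1 two_ne_zero
  have hsx := summable_logTerm hp (hw.trans_lt hρ)
  have hsy := summable_logTerm hp (hw'.trans_lt hρ)
  -- the linear terms of the two series differ by `w - w'`, all others by at most `p⁻¹ ‖w - w'‖`
  have hdiff : w - w' = -∑' k, (logTerm (w - 1) (k + 1) - logTerm (w' - 1) (k + 1)) := by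
    rw [logSeries, logSeries, hsx.tsum_eq_zero_add, hsy.tsum_eq_zero_add] at h
    rw [((summable_nat_add_iff 1).2 hsx).tsum_sub ((summable_nat_add_iff 1).2 hsy)]
    simp only [logTerm, zero_add, pow_one, Nat.cast_zero, div_one, pow_zero, one_mul] at h ⊢
    linear_combination h
  have hle : ‖w - w'‖ ≤ (p : ℝ)⁻¹ * ‖w - w'‖ := by
    conv_lhs => rw [hdiff, norm_neg]
    refine IsUltrametricDist.norm_tsum_le_of_forall_le_of_nonneg (by positivity) fun k => ?_
    simpa using norm_logTerm_succ_sub_logTerm_succ_le hp hw hw' k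
  have : ‖w - w'‖ = 0 := by nlinarith [norm_nonneg (w - w')]
  exact sub_eq_zero.1 (norm_eq_zero.1 this)

namespace HasExpSeriesNearZero

variable {f : Cp → Cp}

theorem isBigO (hp : ‖(p : Cp)‖ = (p : ℝ)⁻¹) (h : HasExpSeriesNearZero f) :
    (fun z => f z - 1 - z) =O[𝓝 0] (fun z => z ^ 2) := by
  obtain ⟨ε, hε, hs⟩ := h
  have hprime : p.Prime := Fact.out
  have hp1 : ‖(p : Cp)‖ < 1 := norm_natCast_prime_lt_one hp
  obtain ⟨N, hN⟩ := ((tendsto_pow_atTop_nhds_zero_of_norm_lt_one hp1).norm.eventually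
    (gt_mem_nhds (by simpa using hε))).exists
  set τ := (p : Cp) ^ N
  have hτ : τ ≠ 0 := pow_ne_zero N (norm_pos_iff.1 (hp ▸ inv_pos.2 (Nat.cast_pos.2 hprime.pos)))
  clear_value τ
  obtain ⟨M, hM⟩ := (hs τ hN).summable.tendsto_atTop_zero.norm.bddAbove_range
  have hM₀ : 0 ≤ M := (norm_nonneg _).trans (hM ⟨0, rfl⟩)
  refine Asymptotics.IsBigO.of_bound (M / ‖τ‖ ^ 2) ?_
  filter_upwards [Metric.closedBall_mem_nhds (0 : Cp) (norm_pos_iff.2 hτ)] with z hz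
  rw [mem_closedBall_zero_iff] at hz
  have htail : HasSum (fun n => z ^ (n + 2) / ((n + 2).factorial : Cp)) (f z - 1 - z) := by
    simpa [Finset.sum_range_succ, sub_sub] using
      (hasSum_nat_add_iff' 2).2 (hs z (hz.trans_lt hN))
  have hq : ‖z / τ‖ ≤ 1 := by rw [norm_div]; exact div_le_one_of_le₀ hz (norm_nonneg _)
  rw [← htail.tsum_eq]
  refine IsUltrametricDist.norm_tsum_le_of_forall_le_of_nonneg (by positivity) fun n => ?_
  calc ‖z ^ (n + 2) / ((n + 2).factorial : Cp)‖
      = ‖z / τ‖ ^ (n + 2) * ‖τ ^ (n + 2) / ((n + 2).factorial : Cp)‖ := by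
        rw [← norm_pow, ← norm_mul, ← mul_div_assoc, div_pow,
          div_mul_cancel₀ _ (pow_ne_zero _ hτ)]
    _ ≤ ‖z / τ‖ ^ 2 * M :=
        mul_le_mul (pow_le_pow_of_le_one (norm_nonneg _) hq (by omega)) (hM ⟨n + 2, rfl⟩)
          (norm_nonneg _) (by positivity)
    _ = M / ‖τ‖ ^ 2 * ‖z ^ 2‖ := by rw [norm_div, norm_pow]; ring

theorem tendsto_nhds_one (hp : ‖(p : Cp)‖ = (p : ℝ)⁻¹) (h : HasExpSeriesNearZero f) :
    Tendsto f (𝓝 0) (𝓝 1) := by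
  have hsq : Tendsto (fun z : Cp => z ^ 2) (𝓝 0) (𝓝 0) := by
    simpa using (continuous_pow 2).tendsto (0 : Cp)
  have hrem := (h.isBigO hp).trans_tendsto hsq
  simpa using (hrem.add tendsto_id).add_const 1

theorem logSeries_apply [CompleteSpace Cp] [CharZero Cp] (hp : ‖(p : Cp)‖ = (p : ℝ)⁻¹)
    (h : HasExpSeriesNearZero f) (hhom : ∀ x y : Cp, f (x + y) = f x * f y) {t : Cp}
    (ht : ‖f t - 1‖ < 1) : logSeries (f t) = t := by
  have hprime : p.Prime := Fact.out
  have hp0 : (p : Cp) ≠ 0 := Nat.cast_ne_zero.2 hprime.ne_zero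
  have hp1 : ‖(p : Cp)‖ < 1 := norm_natCast_prime_lt_one hp
  have hpow := tendsto_pow_atTop_nhds_zero_of_norm_lt_one hp1
  refine tendsto_nhds_unique (tendsto_pow_prime_pow_sub_one_div hp ht) ?_
  rw [← tendsto_sub_nhds_zero_iff]
  -- `(f t ^ p ^ n - 1) / p ^ n - t = (f s - 1 - s) / p ^ n` for `s = p ^ n t`, and this is
  -- `O(s ^ 2 / p ^ n) = O(p ^ n t ^ 2)`
  have hO := ((h.isBigO hp).comp_tendsto (by simpa using hpow.mul_const t)).mul
    (Asymptotics.isBigO_refl (fun n : ℕ => ((p : Cp) ^ n)⁻¹) atTop)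
  refine (hO.trans_tendsto ?_).congr fun n => ?_
  · refine (by simpa using hpow.mul_const (t ^ 2) : Tendsto (fun n : ℕ => (p : Cp) ^ n * t ^ 2)
      atTop (𝓝 0)).congr fun n => ?_
    simp only [Function.comp_apply]
    field_simp
  · simp only [Function.comp_apply]
    rw [← Nat.cast_pow, ← map_natCast_mul_eq_pow h.map_zero hhom, Nat.cast_pow]
    field_simp

theorem exists_pow_prime_pow_eq [CompleteSpace Cp] [CharZero Cp] (hp : ‖(p : Cp)‖ = (p : ℝ)⁻¹)
    (h : HasExpSeriesNearZero f) (hhom : ∀ x y : Cp, f (x + y) = f x * f y) {w : Cp}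
    (hw : ‖w - 1‖ < 1) : ∃ N : ℕ, f (logSeries w) ^ p ^ N = w ^ p ^ N := by
  have hprime : p.Prime := Fact.out
  have hp1 : ‖(p : Cp)‖ < 1 := norm_natCast_prime_lt_one hp
  have hρ : (p : ℝ)⁻¹ ^ 2 < 1 := hp ▸ pow_lt_one₀ (norm_nonneg _) hp1 two_ne_zero
  have hball := Metric.closedBall_mem_nhds (1 : Cp)
    (pow_pos (inv_pos.2 (Nat.cast_pos.2 hprime.pos)) 2 : (0 : ℝ) < (p : ℝ)⁻¹ ^ 2)
  have hsmall : Tendsto (fun N : ℕ => (p : Cp) ^ N * logSeries w) atTop (𝓝 0) := by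
    simpa using (tendsto_pow_atTop_nhds_zero_of_norm_lt_one hp1).mul_const (logSeries w)
  obtain ⟨N, hexp, hpow⟩ := ((hsmall.eventually ((h.tendsto_nhds_one hp).eventually hball)).and
    ((tendsto_pow_prime_pow_nhds_one hp hw).eventually hball)).exists
  refine ⟨N, ?_⟩
  rw [← map_natCast_mul_eq_pow h.map_zero hhom, Nat.cast_pow]
  refine logSeries_injOn hp hexp hpow ?_
  rw [h.logSeries_apply hp hhom ((mem_closedBall_iff_norm.1 hexp).trans_lt hρ),
    logSeries_pow_prime_pow hp hw]

end HasExpSeriesNearZero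

end Ultrametric

theorem CpData.Ppow_zero (E : CpData p Cp) : E.Ppow 0 = 1 := by
  have h := E.Ppow_add 0 0
  rw [add_zero] at h
  exact left_eq_mul.1 h

theorem CpData.angle_of_ord_eq_zero (E : CpData p Cp) {z : Cp} (hz : E.ord z = 0) :
    E.angle z = (E.θ z)⁻¹ * z := by
  simp [CpData.angle, hz, E.Ppow_zero]

theorem expp_logp_root_of_unity_general
    (p : ℕ) [Fact p.Prime] (Cp : Type*) [NormedField Cp] [IsUltrametricDist Cp]
    [CompleteSpace Cp] [CharZero Cp]
    (hp : ‖(p : Cp)‖ = (p : ℝ)⁻¹)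
    (E : CpData p Cp)
    (expp : Cp → Cp)
    (hhom : ∀ x y : Cp, expp (x + y) = expp x * expp y)
    (hser : ∃ ε : ℝ, 0 < ε ∧ ∀ z : Cp, ‖z‖ < ε →
      HasSum (fun n : ℕ => z ^ n / (n.factorial : Cp)) (expp z)) :
    ∀ z : Cp, z ≠ 0 →
      (∃ N : ℕ, (expp (E.logp z)) ^ (p ^ N) = (E.angle z) ^ (p ^ N)) ∧
      (E.ord z = 0 → ∃ n : ℕ, 0 < n ∧ (expp (E.logp z) / z) ^ n = 1) := by
  intro z hz
  obtain ⟨N, hN⟩ :=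
    HasExpSeriesNearZero.exists_pow_prime_pow_eq (w := E.angle z) hp hser hhom (E.angle_lt z hz)
  refine ⟨⟨N, hN⟩, fun hord => ?_⟩
  obtain ⟨n, hn, -, hθ⟩ := E.θ_root z hz
  refine ⟨p ^ N * n, Nat.mul_pos (pow_pos (Fact.out : p.Prime).pos N) hn, ?_⟩
  have hlog : E.logp z = logSeries (E.angle z) := rfl
  rw [div_pow, pow_mul, hlog, hN, ← pow_mul, E.angle_of_ord_eq_zero hord, mul_pow, inv_pow,
    mul_comm (p ^ N), pow_mul (E.θ z), hθ, one_pow, inv_one, one_mul, div_self (pow_ne_zero _ hz)]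

/-- Let `exp_p : ℂ_p → ℂ_p^×` be any group homomorphism from the
additive group to the multiplicative group which coincides with `∑_{n ≥ 0} z^n / n!` on
some neighbourhood of `0`.  Then for every `z ∈ ℂ_p^×` there is an `N ∈ ℕ` with
`(exp_p (log_p z))^{p^N} = ⟨z⟩^{p^N}`; in particular if `ord_p z = 0` then
`exp_p (log_p z) / z` is a root of unity. -/
theorem expp_logp_root_of_unity
    (p : ℕ) [Fact p.Prime] (Cp : Type*) [NormedField Cp] [IsUltrametricDist Cp]
    [IsAlgClosed Cp] [CompleteSpace Cp] [CharZero Cp]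
    (hp : ‖(p : Cp)‖ = (p : ℝ)⁻¹) (hdense : Dense {x : Cp | IsAlgebraic ℚ x})
    (E : CpData p Cp)
    (expp : Cp → Cp)
    (hhom : ∀ x y : Cp, expp (x + y) = expp x * expp y)
    (hser : ∃ ε : ℝ, 0 < ε ∧ ∀ z : Cp, ‖z‖ < ε →
      HasSum (fun n : ℕ => z ^ n / (n.factorial : Cp)) (expp z)) :
    ∀ z : Cp, z ≠ 0 →
      (∃ N : ℕ, (expp (E.logp z)) ^ (p ^ N) = (E.angle z) ^ (p ^ N)) ∧
      (E.ord z = 0 → ∃ n : ℕ, 0 < n ∧ (expp (E.logp z) / z) ^ n = 1) :=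
  expp_logp_root_of_unity_general p Cp hp E expp hhom hser

end Stmt
end
end
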